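/- Let $q$ be an odd prime power. The number of integers $a \bmod (q^2-1)$ with $(q-1) \mid a$ and $(q+1) \nmid a$, counted up to the equivalence $a \sim aq$, equals $(q-1)/2$. -/
import Mathlib


/-- For an odd prime power `q`, the number of residues `a mod (q²-1)` with
`(q-1) ∣ a` and `(q+1) ∤ a`, counted up to the equivalence `a ~ aq mod (q²-1)`
(i.e. the number of orbits `{a, aq mod (q²-1)}`), equals `(q-1)/2`. -/
theorem count_admissible_pairs_level_zero
    (q : ℕ) (hq : Odd q) (hq1 : IsPrimePow q) :
    (((Finset.range (q ^ 2 - 1)).filter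
        (fun a => (q - 1) ∣ a ∧ ¬ (q + 1) ∣ a)).image
      (fun a => ({a, (a * q) % (q ^ 2 - 1)} : Finset ℕ))).card = (q - 1) / 2 := by
  have hq2 : 2 ≤ q := hq1.two_le
  obtain ⟨t, ht⟩ := hq
  have hq3 : 3 ≤ q := by omega
  have hq1' : 1 ≤ q := by omega
  have hqsq : 1 ≤ q ^ 2 := Nat.one_le_pow _ _ (by omega)
  have hn : q ^ 2 - 1 = (q - 1) * (q + 1) := by
    zify [hq1', hqsq]; ring
  -- key modular computation
  have key : ∀ k, 1 ≤ k → k ≤ q → ((q - 1) * k * q) % (q ^ 2 - 1) = (q - 1) * (q + 1 - k) := by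
    intro k hk1 hk2
    have hid : (q - 1) * k * q = (q ^ 2 - 1) * (k - 1) + (q - 1) * (q + 1 - k) := by
      zify [hq1', hqsq, hk1, show k ≤ q + 1 by omega]; ring
    rw [hid, Nat.mul_add_mod, Nat.mod_eq_of_lt]
    rw [hn]
    exact mul_lt_mul_of_pos_left (by omega) (by omega)
  have himg : ((Finset.range (q ^ 2 - 1)).filter
        (fun a => (q - 1) ∣ a ∧ ¬ (q + 1) ∣ a)).image
      (fun a => ({a, (a * q) % (q ^ 2 - 1)} : Finset ℕ))
      = (Finset.Ico 1 ((q + 1) / 2)).image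
        (fun k => ({(q - 1) * k, (q - 1) * (q + 1 - k)} : Finset ℕ)) := by
    apply Finset.Subset.antisymm
    · intro s hs
      simp only [Finset.mem_image, Finset.mem_filter, Finset.mem_range, Finset.mem_Ico] at hs ⊢
      obtain ⟨a, ⟨ha, ⟨k, rfl⟩, hnd⟩, rfl⟩ := hs
      have hklt : k < q + 1 := by
        by_contra h
        push_neg at h
        have : (q - 1) * (q + 1) ≤ (q - 1) * k := Nat.mul_le_mul_left _ h
        omega
      have hk1 : 1 ≤ k := by
        rcases Nat.eq_zero_or_pos k with h | h
        · exfalso; exact hnd (by simp [h])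
        · exact h
      have hkne : k ≠ (q + 1) / 2 := by
        intro h
        apply hnd
        subst h
        have e1 : (q + 1) / 2 = t + 1 := by omega
        have e2 : q - 1 = 2 * t := by omega
        rw [e1, e2, ht]
        exact ⟨t, by ring⟩
      have hfg : ∀ j, 1 ≤ j → j ≤ q →
          ({(q - 1) * j, ((q - 1) * j * q) % (q ^ 2 - 1)} : Finset ℕ)
            = {(q - 1) * j, (q - 1) * (q + 1 - j)} := by
        intro j h1 h2; rw [key j h1 h2]
      rcases lt_or_gt_of_ne hkne with hlt | hgt
      · exact ⟨k, ⟨hk1, hlt⟩, (hfg k hk1 (by omega)).symm⟩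
      · refine ⟨q + 1 - k, ⟨by omega, by omega⟩, ?_⟩
        have h1 : q + 1 - (q + 1 - k) = k := by omega
        rw [h1, Finset.pair_comm]
        exact (hfg k hk1 (by omega)).symm
    · intro s hs
      simp only [Finset.mem_image, Finset.mem_filter, Finset.mem_range, Finset.mem_Ico] at hs ⊢
      obtain ⟨k, ⟨hk1, hk2⟩, rfl⟩ := hs
      refine ⟨(q - 1) * k, ⟨?_, dvd_mul_right _ _, ?_⟩, ?_⟩
      · rw [hn]
        exact mul_lt_mul_of_pos_left (by omega) (by omega)
      · intro hdvd
        have hd2 : (q + 1) ∣ 2 * k := by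
          have := Nat.dvd_sub (dvd_mul_right (q + 1) k) hdvd
          rwa [← Nat.sub_mul, show q + 1 - (q - 1) = 2 by omega] at this
        have := Nat.le_of_dvd (by omega) hd2
        omega
      · rw [key k hk1 (by omega)]
  rw [himg, Finset.card_image_of_injOn, Nat.card_Ico]
  · omega
  · intro k hk k' hk' heq
    simp only [Finset.coe_Ico, Set.mem_Ico] at hk hk'
    dsimp only at heq
    have hmem : (q - 1) * k ∈ ({(q - 1) * k', (q - 1) * (q + 1 - k')} : Finset ℕ) := by
      rw [← heq]; exact Finset.mem_insert_self _ _
    simp only [Finset.mem_insert, Finset.mem_singleton] at hmem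
    rcases hmem with h | h
    · exact Nat.eq_of_mul_eq_mul_left (by omega) h
    · have := Nat.eq_of_mul_eq_mul_left (show 0 < q - 1 by omega) h
      omega
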